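/- Alternative decoupling limit of the coupled σ-model coefficients (Section 3.3.3). Let N = N_1 + N_2 with N_1, N_2 ≥ 1. For k = 1, 2, fix block data consisting of pairwise distinct positions z^{(k)}_1,…,z^{(k)}_{N_k}, zeros (ζ^{(k)}_i)_{i∈I^{(k)}_+⊔I^{(k)}_−} with |I^{(k)}_±| = N_k, all 3N_k numbers of block k pairwise distinct as required, and a common constant ℓ^∞ ∈ ℂ. For real γ ≠ 0 form the combined data of size N: positions z_r(γ) = z^{(1)}_r for r ≤ N_1 and z_{N_1+r}(γ) = z^{(2)}_r + γ^{−1} for r ≤ N_2; zeros ζ_i(γ) = ζ^{(1)}_i for i in block 1 and ζ_i(γ) = ζ^{(2)}_i + γ^{−1} for i in block 2, with I_± = I^{(1)}_± ⊔ I^{(2)}_±. Then for all sufficiently small γ ≠ 0 the combined data satisfies the distinctness hypotheses, the half twist functions factorise as φ_±(z; γ) = φ^{(1)}_±(z) φ^{(2)}_±(z − γ^{−1}), and as γ → 0 the action coefficients ρ_rs(γ) and k_r(γ) built from the combined data satisfy: ρ_rs(γ) → ρ^{(k)}_{r̄ s̄} if r and s lie in the same block k (where r̄, s̄ are the within-block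 indices and ρ^{(k)} is built from the block-k data alone); ρ_rs(γ) → 0 if r and s lie in different blocks; and k_r(γ) → k^{(k)}_{r̄}. Consequently the action of the N-coupled model converges, coefficient by coefficient, to the sum of the actions of the two decoupled models. -/

import Mathlib

open scoped BigOperators Topology
open Filter

/-- One of the two "halves" `φ_±(w) = ∏_{i ∈ I} (w - ζ_i) / ∏_r (w - z_r)` of the twist
function. -/
noncomputable def phiHalf {ι κ : Type*} [Fintype ι] [Fintype κ]
    (z : ι → ℂ) (ζ : κ → ℂ) (I : Finset κ) (w : ℂ) : ℂ :=
  (∏ i ∈ I, (w - ζ i)) / ∏ r, (w - z r)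

/-- The function `φ^r_±(w) = (w - z_r) φ_±(w) = ∏_{i ∈ I} (w - ζ_i) / ∏_{s ≠ r} (w - z_s)`. -/
noncomputable def phiHalfR {ι κ : Type*} [Fintype ι] [DecidableEq ι] [Fintype κ]
    (z : ι → ℂ) (ζ : κ → ℂ) (I : Finset κ) (r : ι) (w : ℂ) : ℂ :=
  (∏ i ∈ I, (w - ζ i)) / ∏ s ∈ Finset.univ.erase r, (w - z s)

/-- The coefficients `ρ_{rs}` of the coupled σ-model action (Equation (3.19)). -/
noncomputable def rhoCoef {ι κ : Type*} [Fintype ι] [DecidableEq ι] [Fintype κ]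
    (linf : ℂ) (z : ι → ℂ) (ζ : κ → ℂ) (Ip Im : Finset κ) (r s : ι) : ℂ :=
  if r = s then
    linf / 4 * (deriv (phiHalfR z ζ Ip r) (z r) * phiHalfR z ζ Im r (z r)
      - phiHalfR z ζ Ip r (z r) * deriv (phiHalfR z ζ Im r) (z r))
  else
    linf / 2 * phiHalfR z ζ Ip r (z r) * phiHalfR z ζ Im s (z s) / (z r - z s)

/-- The Wess–Zumino levels `k_r` of the coupled σ-model (Equation (3.22)). -/
noncomputable def kCoef {ι κ : Type*} [Fintype ι] [DecidableEq ι] [Fintype κ]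
    (linf : ℂ) (z : ι → ℂ) (ζ : κ → ℂ) (Ip Im : Finset κ) (r : ι) : ℂ :=
  linf / 2 * (phiHalfR z ζ Ip r (z r) * deriv (phiHalfR z ζ Im r) (z r)
    + deriv (phiHalfR z ζ Ip r) (z r) * phiHalfR z ζ Im r (z r))

/-! The combined half twist functions factor as `φ_±(w) = φ⁽¹⁾_±(w) φ⁽²⁾_±(w - γ⁻¹)`, and each
block factor is a quotient of monic polynomials of equal degree: it tends to `1` at infinity, and
by Cauchy's estimate on unit discs its derivative tends to `0`. As `γ → 0` the shift `γ⁻¹` escapes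
to infinity, so near the poles of one block the factor contributed by the other block converges to
`1` with vanishing derivative; hence `φ^r_±(z_r)` and `(φ^r_±)'(z_r)` converge to their block
values, and `ρ_rs` for `r`, `s` in different blocks carries the factor `(z_r - z_s)⁻¹ → 0`. -/

open Bornology

theorem Complex.tendsto_deriv_cobounded_of_tendsto {f : ℂ → ℂ} {c : ℂ}
    (hd : ∀ᶠ w in cobounded ℂ, DifferentiableAt ℂ f w) (hf : Tendsto f (cobounded ℂ) (𝓝 c)) :
    Tendsto (deriv f) (cobounded ℂ) (𝓝 0) := by
  refine Metric.tendsto_nhds.2 fun ε hε => ?_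
  have hgood : ∀ᶠ w in cobounded ℂ, DifferentiableAt ℂ f w ∧ ‖f w - c‖ ≤ ε / 2 := by
    simpa only [← dist_eq_norm] using
      hd.and (hf.eventually (Metric.closedBall_mem_nhds c (half_pos hε)))
  obtain ⟨R, hR⟩ : ∃ R, ∀ w : ℂ, R ≤ ‖w‖ → DifferentiableAt ℂ f w ∧ ‖f w - c‖ ≤ ε / 2 := by
    rw [← comap_norm_atTop, eventually_comap, eventually_atTop] at hgood
    obtain ⟨R, hR⟩ := hgood
    exact ⟨R, fun w hw => hR _ hw w rfl⟩
  filter_upwards [eventually_cobounded_le_norm (R + 1)] with z hz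
  have hdisc : ∀ w ∈ Metric.closedBall z 1, DifferentiableAt ℂ f w ∧ ‖f w - c‖ ≤ ε / 2 := by
    refine fun w hw => hR w ?_
    have := norm_sub_norm_le z w
    rw [Metric.mem_closedBall, dist_comm, dist_eq_norm] at hw
    linarith
  have hcauchy := Complex.norm_deriv_le_of_forall_mem_sphere_norm_le (f := fun w => f w - c)
    one_pos (DifferentiableOn.diffContOnCl_ball (U := Metric.closedBall z 1)
      (fun w hw => ((hdisc w hw).1.sub_const c).differentiableWithinAt) le_rfl)
    fun w hw => (hdisc w (Metric.sphere_subset_closedBall hw)).2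
  rw [deriv_sub_const, div_one] at hcauchy
  rw [dist_zero_right]
  linarith

theorem tendsto_prod_sub_div_pow_card_cobounded {κ : Type*} (I : Finset κ) (a : κ → ℂ) :
    Tendsto (fun w : ℂ => (∏ i ∈ I, (w - a i)) / w ^ I.card) (cobounded ℂ) (𝓝 1) := by
  have hfactor : ∀ i ∈ I, Tendsto (fun w : ℂ => 1 - a i * w⁻¹) (cobounded ℂ) (𝓝 1) := by
    intro i _
    simpa using tendsto_const_nhds.sub (tendsto_const_nhds.mul (tendsto_inv₀_cobounded (α := ℂ)))
  have hprod := tendsto_finsetProd I hfactor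
  rw [Finset.prod_const_one] at hprod
  refine hprod.congr' ?_
  filter_upwards [eventually_ne_cobounded 0] with w hw
  rw [← Finset.prod_const, ← Finset.prod_div_distrib]
  refine Finset.prod_congr rfl fun i _ => ?_
  field_simp

section PhiHalf

variable {ι κ : Type*} [Fintype ι] [Fintype κ] (z : ι → ℂ) (ζ : κ → ℂ) (I : Finset κ)

theorem tendsto_phiHalf_cobounded (hI : I.card = Fintype.card ι) :
    Tendsto (phiHalf z ζ I) (cobounded ℂ) (𝓝 1) := by
  have hquot := (tendsto_prod_sub_div_pow_card_cobounded I ζ).div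
    (tendsto_prod_sub_div_pow_card_cobounded Finset.univ z) one_ne_zero
  rw [div_one, Finset.card_univ, ← hI] at hquot
  refine hquot.congr' ?_
  filter_upwards [eventually_ne_cobounded 0] with w hw
  rw [Pi.div_apply, phiHalf, div_div_div_cancel_right₀ (pow_ne_zero _ hw)]

theorem differentiableAt_phiHalf {w : ℂ} (hw : ∀ r, w ≠ z r) :
    DifferentiableAt ℂ (phiHalf z ζ I) w := by
  refine DifferentiableAt.div (by fun_prop) (by fun_prop) ?_
  exact Finset.prod_ne_zero_iff.2 fun r _ => sub_ne_zero.2 (hw r)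

theorem differentiableAt_phiHalfR [DecidableEq ι] (r : ι) {w : ℂ} (hw : ∀ s ≠ r, w ≠ z s) :
    DifferentiableAt ℂ (phiHalfR z ζ I r) w := by
  refine DifferentiableAt.div (by fun_prop) (by fun_prop) ?_
  exact Finset.prod_ne_zero_iff.2 fun s hs => sub_ne_zero.2 (hw s (Finset.ne_of_mem_erase hs))

theorem eventually_differentiableAt_phiHalf_cobounded :
    ∀ᶠ w in cobounded ℂ, DifferentiableAt ℂ (phiHalf z ζ I) w :=
  (eventually_all.2 fun r => eventually_ne_cobounded (z r)).mono
    fun _ hw => differentiableAt_phiHalf z ζ I hw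

end PhiHalf

theorem tendsto_deriv_mul_comp_add_cobounded {α : Type*} {l : Filter α} {f g : ℂ → ℂ}
    {v : α → ℂ} {x : ℂ} (hf : DifferentiableAt ℂ f x)
    (hgd : ∀ᶠ w in cobounded ℂ, DifferentiableAt ℂ g w) (hg : Tendsto g (cobounded ℂ) (𝓝 1))
    (hv : Tendsto v l (cobounded ℂ)) :
    Tendsto (fun t => deriv (fun w => f w * g (w + v t)) x) l (𝓝 (deriv f x)) := by
  have hxv : Tendsto (fun t => x + v t) l (cobounded ℂ) := (tendsto_const_add_cobounded x).comp hv
  have hlim := (tendsto_const_nhds (x := deriv f x)).mul (hg.comp hxv) |>.add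
    ((tendsto_const_nhds (x := f x)).mul
      ((Complex.tendsto_deriv_cobounded_of_tendsto hgd hg).comp hxv))
  rw [mul_one, mul_zero, add_zero] at hlim
  refine hlim.congr' ?_
  filter_upwards [hxv.eventually hgd] with t ht
  have hgx : DifferentiableAt ℂ (fun w => g (w + v t)) x := ht.comp x (by fun_prop)
  rw [deriv_fun_mul hf hgx, deriv_comp_add_const]
  rfl

section ShiftedBlocks

variable {ι₁ ι₂ κ₁ κ₂ : Type*} [Fintype ι₁] [Fintype ι₂] [Fintype κ₁] [Fintype κ₂]
  (z₁ : ι₁ → ℂ) (ζ₁ : κ₁ → ℂ) (z₂ : ι₂ → ℂ) (ζ₂ : κ₂ → ℂ)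

theorem phiHalf_sumElim_shift (u : ℂ) (I₁ : Finset κ₁) (I₂ : Finset κ₂) (w : ℂ) :
    phiHalf (Sum.elim z₁ fun r => z₂ r + u) (Sum.elim ζ₁ fun i => ζ₂ i + u) (I₁.disjSum I₂) w
      = phiHalf z₁ ζ₁ I₁ w * phiHalf z₂ ζ₂ I₂ (w - u) := by
  simp only [phiHalf, Finset.prod_disjSum, Fintype.prod_sum_type, Sum.elim_inl, Sum.elim_inr,
    sub_add_eq_sub_sub_swap, div_mul_div_comm]

variable [DecidableEq ι₁] [DecidableEq ι₂]

theorem phiHalfR_sumElim_shift_inl (u : ℂ) (I₁ : Finset κ₁) (I₂ : Finset κ₂) (r : ι₁) (w : ℂ) :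
    phiHalfR (Sum.elim z₁ fun r => z₂ r + u) (Sum.elim ζ₁ fun i => ζ₂ i + u) (I₁.disjSum I₂)
        (Sum.inl r) w
      = phiHalfR z₁ ζ₁ I₁ r w * phiHalf z₂ ζ₂ I₂ (w - u) := by
  have herase : (Finset.univ : Finset (ι₁ ⊕ ι₂)).erase (Sum.inl r)
      = (Finset.univ.erase r).disjSum Finset.univ := by
    ext s; cases s <;> simp
  simp only [phiHalfR, phiHalf, herase, Finset.prod_disjSum, Sum.elim_inl, Sum.elim_inr,
    sub_add_eq_sub_sub_swap, div_mul_div_comm]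

theorem phiHalfR_sumElim_shift_inr (u : ℂ) (I₁ : Finset κ₁) (I₂ : Finset κ₂) (r : ι₂) (w : ℂ) :
    phiHalfR (Sum.elim z₁ fun r => z₂ r + u) (Sum.elim ζ₁ fun i => ζ₂ i + u) (I₁.disjSum I₂)
        (Sum.inr r) (w + u)
      = phiHalfR z₂ ζ₂ I₂ r w * phiHalf z₁ ζ₁ I₁ (w + u) := by
  have herase : (Finset.univ : Finset (ι₁ ⊕ ι₂)).erase (Sum.inr r)
      = Finset.univ.disjSum (Finset.univ.erase r) := by
    ext s; cases s <;> simp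
  simp only [phiHalfR, phiHalf, herase, Finset.prod_disjSum, Sum.elim_inl, Sum.elim_inr,
    add_sub_add_right_eq_sub, div_mul_div_comm, mul_comm]

end ShiftedBlocks

section ShiftedBlockLimits

variable {ι₁ ι₂ κ₁ κ₂ : Type*} [Fintype ι₁] [Fintype ι₂] [Fintype κ₁] [Fintype κ₂]
  [DecidableEq ι₁] [DecidableEq ι₂] (z₁ : ι₁ → ℂ) (ζ₁ : κ₁ → ℂ) (z₂ : ι₂ → ℂ) (ζ₂ : κ₂ → ℂ)
  {α : Type*} {l : Filter α} {u : α → ℂ}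

theorem tendsto_phiHalfR_sumElim_shift_inl (hu : Tendsto u l (cobounded ℂ)) (J₁ : Finset κ₁)
    {J₂ : Finset κ₂} (hJ₂ : J₂.card = Fintype.card ι₂) (r : ι₁) :
    Tendsto (fun t => phiHalfR (Sum.elim z₁ fun r => z₂ r + u t)
        (Sum.elim ζ₁ fun i => ζ₂ i + u t) (J₁.disjSum J₂) (Sum.inl r) (z₁ r))
      l (𝓝 (phiHalfR z₁ ζ₁ J₁ r (z₁ r))) := by
  simp only [phiHalfR_sumElim_shift_inl]
  simpa using tendsto_const_nhds.mul
    ((tendsto_phiHalf_cobounded z₂ ζ₂ J₂ hJ₂).comp ((tendsto_const_sub_cobounded (z₁ r)).comp hu))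

theorem tendsto_deriv_phiHalfR_sumElim_shift_inl (hu : Tendsto u l (cobounded ℂ))
    (hz₁ : Function.Injective z₁) (J₁ : Finset κ₁) {J₂ : Finset κ₂}
    (hJ₂ : J₂.card = Fintype.card ι₂) (r : ι₁) :
    Tendsto (fun t => deriv (phiHalfR (Sum.elim z₁ fun r => z₂ r + u t)
        (Sum.elim ζ₁ fun i => ζ₂ i + u t) (J₁.disjSum J₂) (Sum.inl r)) (z₁ r))
      l (𝓝 (deriv (phiHalfR z₁ ζ₁ J₁ r) (z₁ r))) := by
  have hfactor : ∀ t, phiHalfR (Sum.elim z₁ fun r => z₂ r + u t)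
      (Sum.elim ζ₁ fun i => ζ₂ i + u t) (J₁.disjSum J₂) (Sum.inl r)
        = fun w => phiHalfR z₁ ζ₁ J₁ r w * phiHalf z₂ ζ₂ J₂ (w + -u t) := fun t => by
    ext w
    rw [phiHalfR_sumElim_shift_inl, sub_eq_add_neg]
  simp only [hfactor]
  exact tendsto_deriv_mul_comp_add_cobounded
    (differentiableAt_phiHalfR z₁ ζ₁ J₁ r fun s hs h => hs (hz₁ h.symm))
    (eventually_differentiableAt_phiHalf_cobounded z₂ ζ₂ J₂)
    (tendsto_phiHalf_cobounded z₂ ζ₂ J₂ hJ₂) (tendsto_neg_cobounded.comp hu)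

theorem tendsto_phiHalfR_sumElim_shift_inr (hu : Tendsto u l (cobounded ℂ)) {J₁ : Finset κ₁}
    (J₂ : Finset κ₂) (hJ₁ : J₁.card = Fintype.card ι₁) (r : ι₂) :
    Tendsto (fun t => phiHalfR (Sum.elim z₁ fun r => z₂ r + u t)
        (Sum.elim ζ₁ fun i => ζ₂ i + u t) (J₁.disjSum J₂) (Sum.inr r) (z₂ r + u t))
      l (𝓝 (phiHalfR z₂ ζ₂ J₂ r (z₂ r))) := by
  simp only [phiHalfR_sumElim_shift_inr]
  simpa using tendsto_const_nhds.mul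
    ((tendsto_phiHalf_cobounded z₁ ζ₁ J₁ hJ₁).comp ((tendsto_const_add_cobounded (z₂ r)).comp hu))

theorem tendsto_deriv_phiHalfR_sumElim_shift_inr (hu : Tendsto u l (cobounded ℂ))
    (hz₂ : Function.Injective z₂) {J₁ : Finset κ₁} (J₂ : Finset κ₂)
    (hJ₁ : J₁.card = Fintype.card ι₁) (r : ι₂) :
    Tendsto (fun t => deriv (phiHalfR (Sum.elim z₁ fun r => z₂ r + u t)
        (Sum.elim ζ₁ fun i => ζ₂ i + u t) (J₁.disjSum J₂) (Sum.inr r)) (z₂ r + u t))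
      l (𝓝 (deriv (phiHalfR z₂ ζ₂ J₂ r) (z₂ r))) := by
  simp only [← deriv_comp_add_const, phiHalfR_sumElim_shift_inr]
  exact tendsto_deriv_mul_comp_add_cobounded
    (differentiableAt_phiHalfR z₂ ζ₂ J₂ r fun s hs h => hs (hz₂ h.symm))
    (eventually_differentiableAt_phiHalf_cobounded z₁ ζ₁ J₁)
    (tendsto_phiHalf_cobounded z₁ ζ₁ J₁ hJ₁) hu

end ShiftedBlockLimits

theorem tendsto_rhoCoef_zero_of_tendsto_cobounded {ι κ α : Type*} [Fintype ι] [DecidableEq ι]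
    [Fintype κ] {l : Filter α} (linf : ℂ) {z : α → ι → ℂ} {ζ : α → κ → ℂ} {Ip Im : Finset κ}
    {r s : ι} (hrs : r ≠ s) {a b : ℂ}
    (hp : Tendsto (fun t => phiHalfR (z t) (ζ t) Ip r (z t r)) l (𝓝 a))
    (hm : Tendsto (fun t => phiHalfR (z t) (ζ t) Im s (z t s)) l (𝓝 b))
    (hz : Tendsto (fun t => z t r - z t s) l (cobounded ℂ)) :
    Tendsto (fun t => rhoCoef linf (z t) (ζ t) Ip Im r s) l (𝓝 0) := by
  have hlim := ((tendsto_const_nhds (x := linf / 2)).mul hp).mul hm |>.mul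
    (tendsto_inv₀_cobounded.comp hz)
  rw [mul_zero] at hlim
  simpa only [rhoCoef, if_neg hrs, div_eq_mul_inv, Function.comp_apply] using hlim

section Coefficients

variable {ι₁ ι₂ κ₁ κ₂ : Type*} [Fintype ι₁] [Fintype ι₂] [Fintype κ₁] [Fintype κ₂]
  [DecidableEq ι₁] [DecidableEq ι₂] {z₁ : ι₁ → ℂ} {ζ₁ : κ₁ → ℂ} {z₂ : ι₂ → ℂ} {ζ₂ : κ₂ → ℂ}
  {α : Type*} {l : Filter α} {u : α → ℂ} {Ip₁ Im₁ : Finset κ₁} {Ip₂ Im₂ : Finset κ₂}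

theorem tendsto_kCoef_sumElim_shift (hu : Tendsto u l (cobounded ℂ))
    (hz₁ : Function.Injective z₁) (hz₂ : Function.Injective z₂)
    (hp₁ : Ip₁.card = Fintype.card ι₁) (hm₁ : Im₁.card = Fintype.card ι₁)
    (hp₂ : Ip₂.card = Fintype.card ι₂) (hm₂ : Im₂.card = Fintype.card ι₂)
    (linf : ℂ) (r : ι₁ ⊕ ι₂) :
    Tendsto (fun t => kCoef linf (Sum.elim z₁ fun r => z₂ r + u t)
        (Sum.elim ζ₁ fun i => ζ₂ i + u t) (Ip₁.disjSum Ip₂) (Im₁.disjSum Im₂) r) l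
      (𝓝 (Sum.elim (fun r => kCoef linf z₁ ζ₁ Ip₁ Im₁ r)
        (fun r => kCoef linf z₂ ζ₂ Ip₂ Im₂ r) r)) := by
  cases r with
  | inl r =>
    exact (((tendsto_phiHalfR_sumElim_shift_inl z₁ ζ₁ z₂ ζ₂ hu Ip₁ hp₂ r).mul
      (tendsto_deriv_phiHalfR_sumElim_shift_inl z₁ ζ₁ z₂ ζ₂ hu hz₁ Im₁ hm₂ r)).add
      ((tendsto_deriv_phiHalfR_sumElim_shift_inl z₁ ζ₁ z₂ ζ₂ hu hz₁ Ip₁ hp₂ r).mul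
      (tendsto_phiHalfR_sumElim_shift_inl z₁ ζ₁ z₂ ζ₂ hu Im₁ hm₂ r))).const_mul (linf / 2)
  | inr r =>
    exact (((tendsto_phiHalfR_sumElim_shift_inr z₁ ζ₁ z₂ ζ₂ hu Ip₂ hp₁ r).mul
      (tendsto_deriv_phiHalfR_sumElim_shift_inr z₁ ζ₁ z₂ ζ₂ hu hz₂ Im₂ hm₁ r)).add
      ((tendsto_deriv_phiHalfR_sumElim_shift_inr z₁ ζ₁ z₂ ζ₂ hu hz₂ Ip₂ hp₁ r).mul
      (tendsto_phiHalfR_sumElim_shift_inr z₁ ζ₁ z₂ ζ₂ hu Im₂ hm₁ r))).const_mul (linf / 2)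

theorem tendsto_rhoCoef_sumElim_shift (hu : Tendsto u l (cobounded ℂ))
    (hz₁ : Function.Injective z₁) (hz₂ : Function.Injective z₂)
    (hp₁ : Ip₁.card = Fintype.card ι₁) (hm₁ : Im₁.card = Fintype.card ι₁)
    (hp₂ : Ip₂.card = Fintype.card ι₂) (hm₂ : Im₂.card = Fintype.card ι₂)
    (linf : ℂ) (r s : ι₁ ⊕ ι₂) :
    Tendsto (fun t => rhoCoef linf (Sum.elim z₁ fun r => z₂ r + u t)
        (Sum.elim ζ₁ fun i => ζ₂ i + u t) (Ip₁.disjSum Ip₂) (Im₁.disjSum Im₂) r s) l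
      (𝓝 (Matrix.fromBlocks (.of (rhoCoef linf z₁ ζ₁ Ip₁ Im₁)) 0 0
        (.of (rhoCoef linf z₂ ζ₂ Ip₂ Im₂)) r s)) := by
  have hVp₁ := tendsto_phiHalfR_sumElim_shift_inl z₁ ζ₁ z₂ ζ₂ hu Ip₁ hp₂
  have hVm₁ := tendsto_phiHalfR_sumElim_shift_inl z₁ ζ₁ z₂ ζ₂ hu Im₁ hm₂
  have hVp₂ := tendsto_phiHalfR_sumElim_shift_inr z₁ ζ₁ z₂ ζ₂ hu Ip₂ hp₁
  have hVm₂ := tendsto_phiHalfR_sumElim_shift_inr z₁ ζ₁ z₂ ζ₂ hu Im₂ hm₁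
  have hDp₁ := tendsto_deriv_phiHalfR_sumElim_shift_inl z₁ ζ₁ z₂ ζ₂ hu hz₁ Ip₁ hp₂
  have hDm₁ := tendsto_deriv_phiHalfR_sumElim_shift_inl z₁ ζ₁ z₂ ζ₂ hu hz₁ Im₁ hm₂
  have hDp₂ := tendsto_deriv_phiHalfR_sumElim_shift_inr z₁ ζ₁ z₂ ζ₂ hu hz₂ Ip₂ hp₁
  have hDm₂ := tendsto_deriv_phiHalfR_sumElim_shift_inr z₁ ζ₁ z₂ ζ₂ hu hz₂ Im₂ hm₁
  rcases r with r | r <;> rcases s with s | s <;>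
    simp only [Matrix.fromBlocks_apply₁₁, Matrix.fromBlocks_apply₁₂, Matrix.fromBlocks_apply₂₁,
      Matrix.fromBlocks_apply₂₂, Matrix.of_apply, Matrix.zero_apply]
  · by_cases hrs : r = s
    · subst hrs
      simpa only [rhoCoef, if_true, Sum.elim_inl] using
        (((hDp₁ r).mul (hVm₁ r)).sub ((hVp₁ r).mul (hDm₁ r))).const_mul (linf / 4)
    · simpa only [rhoCoef, Sum.inl.injEq, if_neg hrs, Sum.elim_inl] using
        ((tendsto_const_nhds.mul (hVp₁ r)).mul (hVm₁ s)).div_const (z₁ r - z₁ s)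
  · exact tendsto_rhoCoef_zero_of_tendsto_cobounded linf Sum.inl_ne_inr (hVp₁ r) (hVm₂ s)
      ((tendsto_const_sub_cobounded (z₁ r)).comp ((tendsto_const_add_cobounded (z₂ s)).comp hu))
  · exact tendsto_rhoCoef_zero_of_tendsto_cobounded linf Sum.inr_ne_inl (hVp₂ r) (hVm₁ s)
      ((tendsto_sub_const_cobounded (z₁ s)).comp ((tendsto_const_add_cobounded (z₂ r)).comp hu))
  · by_cases hrs : r = s
    · subst hrs
      simpa only [rhoCoef, if_true, Sum.elim_inr] using
        (((hDp₂ r).mul (hVm₂ r)).sub ((hVp₂ r).mul (hDm₂ r))).const_mul (linf / 4)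
    · simpa only [rhoCoef, Sum.inr.injEq, if_neg hrs, Sum.elim_inr, add_sub_add_right_eq_sub]
        using ((tendsto_const_nhds.mul (hVp₂ r)).mul (hVm₂ s)).div_const (z₂ r - z₂ s)

end Coefficients

theorem injective_sumElim_shift {ι₁ ι₂ κ₁ κ₂ : Type*} {z₁ : ι₁ → ℂ} {ζ₁ : κ₁ → ℂ} {z₂ : ι₂ → ℂ}
    {ζ₂ : κ₂ → ℂ} (hd₁ : Function.Injective (Sum.elim z₁ ζ₁))
    (hd₂ : Function.Injective (Sum.elim z₂ ζ₂)) {u : ℂ}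
    (hu : ∀ p q, Sum.elim z₁ ζ₁ p ≠ Sum.elim z₂ ζ₂ q + u) :
    Function.Injective
      (Sum.elim (Sum.elim z₁ fun r => z₂ r + u) (Sum.elim ζ₁ fun i => ζ₂ i + u)) := by
  have hregroup : Sum.elim (Sum.elim z₁ fun r => z₂ r + u) (Sum.elim ζ₁ fun i => ζ₂ i + u)
      = Sum.elim (Sum.elim z₁ ζ₁) (fun q => Sum.elim z₂ ζ₂ q + u) ∘
          Equiv.sumSumSumComm ι₁ ι₂ κ₁ κ₂ := by
    ext ((r | r) | (i | i)) <;> rfl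
  rw [hregroup]
  exact ((hd₁.sumElim ((add_left_injective u).comp hd₂) hu).comp (Equiv.injective _))

theorem eventually_injective_sumElim_shift {ι₁ ι₂ κ₁ κ₂ : Type*} [Finite ι₁] [Finite ι₂]
    [Finite κ₁] [Finite κ₂] {z₁ : ι₁ → ℂ} {ζ₁ : κ₁ → ℂ} {z₂ : ι₂ → ℂ} {ζ₂ : κ₂ → ℂ}
    (hd₁ : Function.Injective (Sum.elim z₁ ζ₁)) (hd₂ : Function.Injective (Sum.elim z₂ ζ₂))
    {α : Type*} {l : Filter α} {u : α → ℂ} (hu : Tendsto u l (cobounded ℂ)) :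
    ∀ᶠ t in l, Function.Injective
      (Sum.elim (Sum.elim z₁ fun r => z₂ r + u t) (Sum.elim ζ₁ fun i => ζ₂ i + u t)) := by
  have hfar : ∀ᶠ t in l, ∀ p q, Sum.elim z₁ ζ₁ p ≠ Sum.elim z₂ ζ₂ q + u t :=
    eventually_all.2 fun p => eventually_all.2 fun q =>
      (hu.eventually_ne_cobounded (Sum.elim z₁ ζ₁ p - Sum.elim z₂ ζ₂ q)).mono
        fun t ht h => ht (eq_sub_of_add_eq' h.symm)
  exact hfar.mono fun t ht => injective_sumElim_shift hd₁ hd₂ ht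

theorem tendsto_ofReal_inv_nhdsNE_zero_cobounded :
    Tendsto (fun γ : ℝ => (γ : ℂ)⁻¹) (𝓝[≠] 0) (cobounded ℂ) := by
  rw [← tendsto_norm_atTop_iff_cobounded]
  simpa only [norm_inv, Complex.norm_real] using
    tendsto_norm_atTop_iff_cobounded.2 (tendsto_inv₀_nhdsNE_zero (α := ℝ))

theorem alternative_decoupling_of_action_coefficients
    {N₁ N₂ : ℕ}
    (z1 : Fin N₁ → ℂ) (ζ1 : Fin (2 * N₁) → ℂ)
    (z2 : Fin N₂ → ℂ) (ζ2 : Fin (2 * N₂) → ℂ)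
    (hd1 : Function.Injective (Sum.elim z1 ζ1 : Fin N₁ ⊕ Fin (2 * N₁) → ℂ))
    (hd2 : Function.Injective (Sum.elim z2 ζ2 : Fin N₂ ⊕ Fin (2 * N₂) → ℂ))
    (I1p I1m : Finset (Fin (2 * N₁))) (I2p I2m : Finset (Fin (2 * N₂)))
    (h1p : I1p.card = N₁) (h1m : I1m.card = N₁)
    (h2p : I2p.card = N₂) (h2m : I2m.card = N₂)
    (linf : ℂ) :
    -- for all sufficiently small `γ ≠ 0`, distinctness and factorisation hold …
    (∃ ε > (0 : ℝ), ∀ γ : ℝ, 0 < |γ| → |γ| < ε →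
      Function.Injective
        (Sum.elim (Sum.elim z1 fun r => z2 r + (γ : ℂ)⁻¹)
          (Sum.elim ζ1 fun i => ζ2 i + (γ : ℂ)⁻¹) :
          (Fin N₁ ⊕ Fin N₂) ⊕ (Fin (2 * N₁) ⊕ Fin (2 * N₂)) → ℂ) ∧
      (∀ w : ℂ,
        phiHalf (Sum.elim z1 fun r => z2 r + (γ : ℂ)⁻¹)
            (Sum.elim ζ1 fun i => ζ2 i + (γ : ℂ)⁻¹) (I1p.disjSum I2p) w
          = phiHalf z1 ζ1 I1p w * phiHalf z2 ζ2 I2p (w - (γ : ℂ)⁻¹) ∧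
        phiHalf (Sum.elim z1 fun r => z2 r + (γ : ℂ)⁻¹)
            (Sum.elim ζ1 fun i => ζ2 i + (γ : ℂ)⁻¹) (I1m.disjSum I2m) w
          = phiHalf z1 ζ1 I1m w * phiHalf z2 ζ2 I2m (w - (γ : ℂ)⁻¹))) ∧
    -- … the coefficients `ρ_{rs}(γ)` converge to the block coefficients, or to 0 across blocks
    (∀ r s : Fin N₁ ⊕ Fin N₂,
      Tendsto
        (fun γ : ℝ =>
          rhoCoef linf (Sum.elim z1 fun r' => z2 r' + (γ : ℂ)⁻¹)
            (Sum.elim ζ1 fun i => ζ2 i + (γ : ℂ)⁻¹)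
            (I1p.disjSum I2p) (I1m.disjSum I2m) r s)
        (𝓝[≠] (0 : ℝ))
        (𝓝 (match r, s with
          | Sum.inl r', Sum.inl s' => rhoCoef linf z1 ζ1 I1p I1m r' s'
          | Sum.inr r', Sum.inr s' => rhoCoef linf z2 ζ2 I2p I2m r' s'
          | _, _ => 0))) ∧
    -- … and the levels `k_r(γ)` converge to the block levels
    (∀ r : Fin N₁ ⊕ Fin N₂,
      Tendsto
        (fun γ : ℝ =>
          kCoef linf (Sum.elim z1 fun r' => z2 r' + (γ : ℂ)⁻¹)
            (Sum.elim ζ1 fun i => ζ2 i + (γ : ℂ)⁻¹)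
            (I1p.disjSum I2p) (I1m.disjSum I2m) r)
        (𝓝[≠] (0 : ℝ))
        (𝓝 (Sum.elim (fun r' => kCoef linf z1 ζ1 I1p I1m r')
          (fun r' => kCoef linf z2 ζ2 I2p I2m r') r))) := by
  have hu := tendsto_ofReal_inv_nhdsNE_zero_cobounded
  have hz1 : Function.Injective z1 := hd1.comp Sum.inl_injective
  have hz2 : Function.Injective z2 := hd2.comp Sum.inl_injective
  have hp1 : I1p.card = Fintype.card (Fin N₁) := by rw [h1p, Fintype.card_fin]
  have hm1 : I1m.card = Fintype.card (Fin N₁) := by rw [h1m, Fintype.card_fin]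
  have hp2 : I2p.card = Fintype.card (Fin N₂) := by rw [h2p, Fintype.card_fin]
  have hm2 : I2m.card = Fintype.card (Fin N₂) := by rw [h2m, Fintype.card_fin]
  refine ⟨?_, ?_, tendsto_kCoef_sumElim_shift hu hz1 hz2 hp1 hm1 hp2 hm2 linf⟩
  · obtain ⟨ε, hε, hinj⟩ := Metric.eventually_nhds_iff.1
      (eventually_nhdsWithin_iff.1 (eventually_injective_sumElim_shift hd1 hd2 hu))
    refine ⟨ε, hε, fun γ hγ hγε => ⟨hinj (by rwa [Real.dist_0_eq_abs]) (abs_pos.1 hγ), fun w =>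
      ⟨phiHalf_sumElim_shift z1 ζ1 z2 ζ2 _ I1p I2p w,
        phiHalf_sumElim_shift z1 ζ1 z2 ζ2 _ I1m I2m w⟩⟩⟩
  · rintro (r | r) (s | s) <;>
      exact tendsto_rhoCoef_sumElim_shift hu hz1 hz2 hp1 hm1 hp2 hm2 linf _ _
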